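/- Let n ∈ ℕ and T be an n-tower in a matroid M. For every k with 1 < k ≤ n, there exists i < k such that {e_{{i}}, e_{{i,k}}, e_{{k}}} is a triangle (3-element circuit) of M. -/

import Mathlib

open Set Matroid

namespace Paper

variable {α : Type*}

/-- `a` and `b` are parallel (possibly equal) nonloops of `M`. -/
def Para (M : Matroid α) (a b : α) : Prop :=
  M.Indep {a} ∧ M.Indep {b} ∧ b ∈ M.closure {a}

/-- The rank of a matroid. -/
noncomputable def rk (M : Matroid α) : ℕ :=
  sSup {n | ∃ I, M.Indep I ∧ I.ncard = n}

/-- `C` is a circuit of `M`: a minimal dependent set. -/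
def IsCircuit (M : Matroid α) (C : Set α) : Prop :=
  M.Dep C ∧ ∀ D ⊂ C, ¬ M.Dep D

/-- A matroid is simple if every subset of size at most two is independent. -/
def Simple (M : Matroid α) : Prop :=
  ∀ X ⊆ M.E, X.Finite → X.ncard ≤ 2 → M.Indep X

/-- The number of points (parallel classes of nonloops) of `M`. -/
noncomputable def eps (M : Matroid α) : ℕ :=
  {P : Set α | ∃ a, M.Indep {a} ∧ P = {b | Para M a b}}.ncard

/-- Contraction of the set `C` from `M`, defined by duality. -/
noncomputable def contract (M : Matroid α) (C : Set α) : Matroid α :=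
  (M✶ ↾ (M.E \ C))✶

/-- `N` is a minor of `M`: obtained by contracting a set `C` (with basis `I`) and
deleting some further elements. -/
def IsMinor (N M : Matroid α) : Prop :=
  ∃ C I, C ⊆ M.E ∧ M.IsBasis I C ∧ N.E ⊆ M.E \ C ∧
    ∀ X ⊆ N.E, (N.Indep X ↔ M.Indep (X ∪ I))

/-- `M` has a minor isomorphic to the rank-2 uniform matroid `U_{2,k}`. -/
def HasUnifMinor (M : Matroid α) (k : ℕ) : Prop :=
  ∃ N, IsMinor N M ∧ N.E.Finite ∧ N.E.ncard = k ∧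
    ∀ X ⊆ N.E, (N.Indep X ↔ X.ncard ≤ 2)

/-- `M` has a restriction isomorphic to `U_{2,k}`. -/
def HasUnifRestriction (M : Matroid α) (k : ℕ) : Prop :=
  ∃ X ⊆ M.E, X.Finite ∧ X.ncard = k ∧ ∀ Y ⊆ X, (M.Indep Y ↔ Y.ncard ≤ 2)

/-- `C` is the edge set of a cycle of the simple graph `G`. -/
def GraphicCircuit {V : Type*} (G : SimpleGraph V) (C : Set (Sym2 V)) : Prop :=
  ∃ (v : V) (w : G.Walk v v), w.IsCycle ∧ C = {e | e ∈ w.edges}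

/-- `N` is isomorphic to the cycle matroid of the simple graph `G`. -/
def IsGraphicIso {V : Type*} (N : Matroid α) (G : SimpleGraph V) : Prop :=
  ∃ f : α → Sym2 V, InjOn f N.E ∧ f '' N.E = G.edgeSet ∧
    ∀ C ⊆ N.E, (IsCircuit N C ↔ GraphicCircuit G (f '' C))

/-- `M` has a minor isomorphic to the cycle matroid `M(K_t)`. -/
def HasCliqueMinor (M : Matroid α) (t : ℕ) : Prop :=
  ∃ N, IsMinor N M ∧ IsGraphicIso N (SimpleGraph.completeGraph (Fin t))

/-- A simple graph has a `K_t`-minor, via branch sets. -/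
def HasGraphCliqueMinor {V : Type*} (G : SimpleGraph V) (t : ℕ) : Prop :=
  ∃ f : V → Option (Fin t),
    (∀ i : Fin t, (G.induce {v | f v = some i}).Connected) ∧
    ∀ i j : Fin t, i ≠ j → ∃ u v, f u = some i ∧ f v = some j ∧ G.Adj u v

/-- The extremal density threshold `d(t)` for `K_t`-minors. -/
noncomputable def dthr (t : ℕ) : ℝ :=
  sInf {c : ℝ | ∀ (n : ℕ) (G : SimpleGraph (Fin n)),
    (G.edgeSet.ncard : ℝ) > c * n → HasGraphCliqueMinor G t}

/-- A multigraph: loops and parallel edges allowed. -/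
structure Multigraph (V : Type*) (E : Type*) where
  ends : E → Sym2 V

/-- A cycle in a multigraph: distinct vertices `v_0, …, v_n` and distinct edges
`e_0, …, e_n` with `e_i` joining `v_i` and `v_{i+1}` (cyclically).  The case `n = 0`
is a loop and `n = 1` a pair of parallel edges. -/
structure Cycle {V E : Type*} (G : Multigraph V E) where
  n : ℕ
  vtx : Fin (n+1) → V
  edge : Fin (n+1) → E
  vtx_inj : Function.Injective vtx
  edge_inj : Function.Injective edge
  ends_eq : ∀ i, G.ends (edge i) = s(vtx i, vtx (i+1))

/-- `C` is the edge set of a cycle of `G`. -/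
def IsCycleSet {V E : Type*} (G : Multigraph V E) (C : Set E) : Prop :=
  ∃ c : Cycle G, Set.range c.edge = C

/-- The edge set `X` induces a connected subgraph. -/
def EdgeConn {V E : Type*} (G : Multigraph V E) (X : Set E) : Prop :=
  X.Nonempty ∧ ∀ e ∈ X, ∀ f ∈ X,
    Relation.ReflTransGen (fun a b => a ∈ X ∧ b ∈ X ∧ ∃ v, v ∈ G.ends a ∧ v ∈ G.ends b) e f

/-- `X` contains (the edge sets of) at least two distinct cycles. -/
def TwoCycles {V E : Type*} (G : Multigraph V E) (X : Set E) : Prop :=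
  ∃ C₁ C₂, C₁ ⊆ X ∧ C₂ ⊆ X ∧ IsCycleSet G C₁ ∧ IsCycleSet G C₂ ∧ C₁ ≠ C₂

/-- `X` is the edge set of a minimal connected subgraph containing more than one
cycle; these are precisely the thetas and handcuffs of `G`. -/
def MinConnTwo {V E : Type*} (G : Multigraph V E) (X : Set E) : Prop :=
  EdgeConn G X ∧ TwoCycles G X ∧ ∀ Y ⊂ X, ¬ (EdgeConn G Y ∧ TwoCycles G Y)

/-- `X` is the edge set of a theta subgraph: a minimal connected subgraph with more
than one cycle that contains exactly three cycles. -/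
def IsTheta {V E : Type*} (G : Multigraph V E) (X : Set E) : Prop :=
  MinConnTwo G X ∧ {C | IsCycleSet G C ∧ C ⊆ X}.ncard = 3

/-- `(G, B)` is a biased graph: `B` is a set of cycles such that no theta contains
exactly two balanced cycles. -/
def IsBiased {V E : Type*} (G : Multigraph V E) (B : Set (Set E)) : Prop :=
  (∀ C ∈ B, IsCycleSet G C) ∧
  ∀ X, IsTheta G X → {C | C ⊆ X ∧ IsCycleSet G C ∧ C ∈ B}.ncard ≠ 2

/-- The circuits of the frame matroid `FM(G,B)`: balanced cycles, together with
thetas and handcuffs containing no balanced cycle. -/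
def FrameCircuit {V E : Type*} (G : Multigraph V E) (B : Set (Set E)) (C : Set E) : Prop :=
  (IsCycleSet G C ∧ C ∈ B) ∨ (MinConnTwo G C ∧ ∀ D ⊆ C, IsCycleSet G D → D ∉ B)

/-- `M` is the frame matroid `FM(G,B)` of the biased graph `(G,B)`: its ground set is
`E(G)` and its circuits are exactly the frame circuits. -/
def IsFM {V E : Type*} (G : Multigraph V E) (B : Set (Set E)) (M : Matroid E) : Prop :=
  M.E = univ ∧ ∀ C, IsCircuit M C ↔ FrameCircuit G B C

/-- Connectedness of a multigraph. -/
def MGConnected {V E : Type*} (G : Multigraph V E) : Prop :=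
  Nonempty V ∧ ∀ u v : V, Relation.ReflTransGen (fun a b => ∃ e, G.ends e = s(a,b)) u v

/-- `M` is framed by `B`: `B` is a base and every element is spanned by at most two
elements of `B`. -/
def IsFramed (M : Matroid α) (B : Set α) : Prop :=
  M.IsBase B ∧ ∀ e ∈ M.E, ∃ S ⊆ B, S.Finite ∧ S.ncard ≤ 2 ∧ e ∈ M.closure S

/-- A frame matroid: a restriction of a matroid framed by some set. -/
def IsFrameMatroid (M : Matroid α) : Prop :=
  ∃ (M' : Matroid α) (B R : Set α), IsFramed M' B ∧ R ⊆ M'.E ∧ M = M' ↾ R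

/-- A `B`-clique: a matroid framed by `B` in which every pair of elements of `B` lies
in a common triangle. -/
def IsBClique (M : Matroid α) (B : Set α) : Prop :=
  IsFramed M B ∧ ∀ a ∈ B, ∀ b ∈ B, a ≠ b →
    ∃ T, IsCircuit M T ∧ T.ncard = 3 ∧ a ∈ T ∧ b ∈ T

/-- Gain graphs over a group `Γ`. -/
structure GainGraph (V E Γ : Type*) [Group Γ] where
  src : E → V
  tgt : E → V
  gain : E → Γ

/-- The underlying multigraph of a gain graph. -/
def GainGraph.toMultigraph {V E Γ : Type*} [Group Γ] (G : GainGraph V E Γ) :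
    Multigraph V E :=
  ⟨fun e => s(G.src e, G.tgt e)⟩

open scoped Classical in
/-- `C` is the edge set of a balanced cycle of the gain graph `G`: the ordered product
of the gains (inverted when the edge is traversed against its direction) is `1`. -/
def GainGraph.BalancedSet {V E Γ : Type*} [Group Γ] (G : GainGraph V E Γ)
    (C : Set E) : Prop :=
  ∃ c : Cycle G.toMultigraph, Set.range c.edge = C ∧
    (List.ofFn (fun i => if G.src (c.edge i) = c.vtx i then G.gain (c.edge i)
      else (G.gain (c.edge i))⁻¹)).prod = 1

/-- `n`-towers in a matroid, indexed by the nonempty subsets of `[n] = {1, …, n}`. -/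
def IsTower (M : Matroid α) : ℕ → (Finset ℕ → α) → Prop
  | 0, _ => False
  | 1, e => M.Indep {e {1}}
  | n+2, e =>
    (∀ X : Finset ℕ, X.Nonempty → X ⊆ Finset.Icc 1 (n+1) →
       Para (contract M {e {n+2}}) (e X) (e (insert (n+2) X))) ∧
    (∃ X : Finset ℕ, X.Nonempty ∧ X ⊆ Finset.Icc 1 (n+1) ∧
       ¬ Para M (e X) (e (insert (n+2) X))) ∧
    IsTower M (n+1) e ∧ IsTower (contract M {e {n+2}}) (n+1) e ∧
    IsTower M (n+1) (fun X => e (insert (n+2) X)) ∧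
    IsTower (contract M {e {n+2}}) (n+1) (fun X => e (insert (n+2) X))

/-- Equivalence of `n`-towers: corresponding elements are parallel. -/
def TowerEquiv (M : Matroid α) (n : ℕ) (e e' : Finset ℕ → α) : Prop :=
  ∀ X : Finset ℕ, X.Nonempty → X ⊆ Finset.Icc 1 n → Para M (e X) (e' X)

/-- `w M i` is the number of equivalence classes of `i`-towers of `M` (for `i ≥ 1`),
with `w M 0 = r(M)`. -/
noncomputable def w (M : Matroid α) (i : ℕ) : ℕ :=
  if i = 0 then rk M else
    {s : Set (Finset ℕ → α) | ∃ e, IsTower M i e ∧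
      s = {e' | IsTower M i e' ∧ TowerEquiv M i e e'}}.ncard

/-- `G` is the projective geometry matroid on the projectivization of `W`:
a set of projective points is independent iff it admits a linearly independent
choice of representatives. -/
def IsPG {F : Type*} [Field F] {W : Type*} [AddCommGroup W] [Module F W]
    (G : Matroid (Projectivization F W)) : Prop :=
  G.E = univ ∧ ∀ I : Set (Projectivization F W),
    G.Indep I ↔ Projectivization.Independent (fun x : I => x.1)

/-!
The top element `e_k` of a `k`-tower is a nonloop, since contracting a loop changes no
parallelism. The joints `J_X = {e_i : i ∈ X}` are independent (even in `M / e_k`) and span `e_X`.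
If every `e_i` with `i < k` were parallel to `e_{i,k}`, then for an `X` with `e_X` not parallel
to `e_{X ∪ k}`, both `e_X` and `e_{X ∪ k}` would lie in `cl(J_X)`, which avoids `e_k`; as
`e_{X ∪ k} ∈ cl{e_k, e_X}`, exchange would give `e_{X ∪ k} ∈ cl{e_X}`. Hence some `e_i` is not
parallel to `e_{i,k}` in `M` although it is in `M / e_k`, and then `{e_i, e_{i,k}, e_k}` is a
triangle.
-/

section Matroids

variable {M : Matroid α} {a b c : α} {C D : Set α}

theorem contract_eq_contract (M : Matroid α) (C : Set α) : contract M C = M ／ C := rfl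

theorem isCircuit_iff_isCircuit : IsCircuit M C ↔ M.IsCircuit C := by
  rw [Matroid.IsCircuit, minimal_iff_forall_lt]
  rfl

theorem Para.of_delete (h : Para (M ＼ D) a b) : Para M a b := by
  obtain ⟨ha, hb, hab⟩ := h
  rw [delete_closure_eq] at hab
  exact ⟨(delete_indep_iff.1 ha).1, (delete_indep_iff.1 hb).1,
    M.closure_subset_closure sdiff_subset hab.1⟩

theorem Para.of_contract_of_not_indep (ha : ¬ M.Indep {a}) (h : Para (M ／ {a}) b c) :
    Para M b c := by
  have hloops : {a} ∩ M.E ⊆ M.loops := by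
    rintro _ ⟨rfl, haE⟩
    exact (not_isNonloop_iff haE).1 (by rwa [← indep_singleton])
  rw [← contract_inter_ground_eq, contract_eq_delete_of_subset_loops hloops] at h
  exact h.of_delete

theorem isCircuit_of_para_contract_of_not_para (ha : M.IsNonloop a) (h : Para (M ／ {a}) b c)
    (hnp : ¬ Para M b c) : M.IsCircuit {b, c, a} ∧ ({b, c, a} : Set α).ncard = 3 := by
  obtain ⟨hb, hc, hcl⟩ := h
  obtain ⟨hba, hab⟩ := ha.contractElem_indep_iff.1 hb
  obtain ⟨hca, hac⟩ := ha.contractElem_indep_iff.1 hc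
  rw [mem_singleton_iff] at hba hca
  rw [pair_comm] at hab
  rw [contract_closure_eq, singleton_union] at hcl
  have hca' : c ∉ M.closure {a} :=
    ((ha.indep.insert_indep_iff_of_notMem (Ne.symm hca)).1 (pair_comm a c ▸ hac)).2
  have hcb : c ∉ M.closure {b} := fun h ↦ hnp ⟨hb.of_contract, hc.of_contract, h⟩
  have hbc : b ≠ c := by rintro rfl; exact hcb (M.mem_closure_self b)
  have hcircuit : M.IsCircuit (insert c {b, a}) := by
    refine hab.insert_isCircuit_of_forall ?_ hcl.1 ?_
    · rintro (rfl | rfl)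
      exacts [hbc rfl, hca' (M.mem_closure_self c ha.mem_ground)]
    · rintro f (rfl | rfl)
      · exact fun h ↦ hca' (M.closure_subset_closure (by simp) h)
      · exact fun h ↦ hcb (M.closure_subset_closure (by simp) h)
  rw [insert_comm] at hcircuit
  exact ⟨hcircuit, ncard_eq_three.2 ⟨b, c, a, hbc, Ne.symm hba, Ne.symm hca, rfl⟩⟩

end Matroids

theorem erase_subset_Icc {X : Finset ℕ} {n : ℕ} (h : X ⊆ Finset.Icc 1 (n + 1)) :
    X.erase (n + 1) ⊆ Finset.Icc 1 n := by
  intro i hi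
  have hi' := Finset.mem_Icc.1 (h (Finset.mem_of_mem_erase hi))
  rw [Finset.mem_Icc]
  have := Finset.ne_of_mem_erase hi
  omega

section Towers

variable {M : Matroid α} {e : Finset ℕ → α}

def joints (e : Finset ℕ → α) (X : Finset ℕ) : Set α := (fun i ↦ e {i}) '' X

theorem joints_insert (e : Finset ℕ → α) (i : ℕ) (X : Finset ℕ) :
    joints e (insert i X) = insert (e {i}) (joints e X) := by
  rw [joints, Finset.coe_insert, image_insert_eq, joints]

namespace IsTower

theorem of_le : ∀ {n m : ℕ}, IsTower M n e → 1 ≤ m → m ≤ n → IsTower M m e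
  | 0, _, h, _, _ => h.elim
  | 1, m, h, h1, hm => by rwa [show m = 1 by omega]
  | n + 2, m, h, h1, hm => by
    obtain rfl | hm := eq_or_lt_of_le hm
    · exact h
    · exact of_le h.2.2.1 h1 (by omega)

theorem isNonloop_top {n : ℕ} (h : IsTower M (n + 2) e) : M.IsNonloop (e {n + 2}) := by
  rw [← indep_singleton]
  by_contra ha
  obtain ⟨hpara, ⟨X, hX, hXn, hnp⟩, -⟩ := h
  exact hnp (Para.of_contract_of_not_indep ha (hpara X hX hXn))

theorem mem_closure_joints : ∀ {n : ℕ} {M : Matroid α} {e : Finset ℕ → α}, IsTower M n e →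
    ∀ {X : Finset ℕ}, X.Nonempty → X ⊆ Finset.Icc 1 n → e X ∈ M.closure (joints e X)
  | 0, _, _, h, _, _, _ => h.elim
  | 1, M, e, h, X, hX, hXn => by
    obtain rfl : X = {1} := by
      rwa [Finset.Icc_self, hX.subset_singleton_iff] at hXn
    simpa [joints] using M.mem_closure_self _ (indep_singleton.1 h).mem_ground
  | n + 2, M, e, h, X, hX, hXn => by
    have ha := h.isNonloop_top
    obtain ⟨hpara, -, hlow, -⟩ := h
    by_cases hmem : n + 2 ∈ X
    · rw [← Finset.insert_erase hmem, joints_insert]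
      obtain hY | hY := (X.erase (n + 2)).eq_empty_or_nonempty
      · rw [hY]
        exact M.mem_closure_of_mem' (mem_insert _ _) ha.mem_ground
      · have hcl := (hpara _ hY (erase_subset_Icc hXn)).2.2
        rw [contract_eq_contract, contract_closure_eq, union_singleton] at hcl
        refine M.closure_subset_closure_of_subset_closure ?_ hcl.1
        refine insert_subset (M.mem_closure_of_mem' (mem_insert _ _) ha.mem_ground) ?_
        exact singleton_subset_iff.2 <| M.closure_subset_closure (subset_insert _ _)
          (mem_closure_joints hlow hY (erase_subset_Icc hXn))
    · exact mem_closure_joints hlow hX (Finset.erase_eq_of_notMem hmem ▸ erase_subset_Icc hXn)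

theorem indep_joints : ∀ {n : ℕ} {M : Matroid α} {e : Finset ℕ → α}, IsTower M n e →
    ∀ {X : Finset ℕ}, X ⊆ Finset.Icc 1 n → M.Indep (joints e X)
  | 0, _, _, h, _, _ => h.elim
  | 1, M, e, h, X, hXn => by
    rw [Finset.Icc_self] at hXn
    obtain rfl | rfl := Finset.subset_singleton_iff.1 hXn
    · simp [joints]
    · rw [joints, Finset.coe_singleton, image_singleton]
      exact h
  | n + 2, M, e, h, X, hXn => by
    have ha := h.isNonloop_top
    obtain ⟨-, -, hlow, hlowc, -⟩ := h
    by_cases hmem : n + 2 ∈ X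
    · rw [← Finset.insert_erase hmem, joints_insert]
      exact (ha.contractElem_indep_iff.1 (indep_joints hlowc (erase_subset_Icc hXn))).2
    · rw [← Finset.erase_eq_of_notMem hmem]
      exact indep_joints hlow (erase_subset_Icc hXn)

theorem exists_not_para_singleton {m : ℕ} (h : IsTower M (m + 2) e) :
    ∃ i ∈ Finset.Icc 1 (m + 1), ¬ Para M (e {i}) (e (insert (m + 2) {i})) := by
  by_contra! hpar
  have ha := h.isNonloop_top
  obtain ⟨hpara, ⟨X, hX, hXn, hnp⟩, hlow, hlowc, hup, -⟩ := h
  obtain ⟨hx, hy, hxy⟩ := hpara X hX hXn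
  rw [contract_eq_contract, contract_closure_eq, union_singleton] at hxy
  obtain ⟨haJ, haJi⟩ := ha.contractElem_indep_iff.1 (hlowc.indep_joints hXn)
  have ha_notMem : e {m + 2} ∉ M.closure (joints e X) :=
    ((haJi.subset (subset_insert _ _)).insert_indep_iff_of_notMem haJ |>.1 haJi).2
  have hy_mem : e (insert (m + 2) X) ∈ M.closure (joints e X) := by
    refine M.closure_subset_closure_of_subset_closure ?_ (hup.mem_closure_joints hX hXn)
    rintro _ ⟨i, hi, rfl⟩
    exact M.closure_subset_closure (singleton_subset_iff.2 (mem_image_of_mem _ hi))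
      (hpar i (hXn hi)).2.2
  refine hnp ⟨hx.of_contract, hy.of_contract, by_contra fun hne ↦ ha_notMem ?_⟩
  refine M.closure_subset_closure_of_subset_closure ?_ (mem_closure_insert hne hxy.1)
  exact insert_subset hy_mem (singleton_subset_iff.2 (hlow.mem_closure_joints hX hXn))

end IsTower

end Towers

theorem statement16 {α : Type*} (n : ℕ) (M : Matroid α) (e : Finset ℕ → α)
    (hT : IsTower M n e) (k : ℕ) (hk1 : 1 < k) (hk2 : k ≤ n) :
    ∃ i, 1 ≤ i ∧ i < k ∧
      IsCircuit M {e {i}, e {i, k}, e {k}} ∧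
      ({e {i}, e {i, k}, e {k}} : Set α).ncard = 3 := by
  obtain ⟨m, rfl⟩ : ∃ m, k = m + 2 := ⟨k - 2, by omega⟩
  have hTk := hT.of_le (by omega) hk2
  obtain ⟨i, hi, hnp⟩ := hTk.exists_not_para_singleton
  have hpara := hTk.1 {i} (Finset.singleton_nonempty i) (Finset.singleton_subset_iff.2 hi)
  obtain ⟨hcircuit, hcard⟩ :=
    isCircuit_of_para_contract_of_not_para hTk.isNonloop_top hpara hnp
  obtain ⟨hi1, hik⟩ := Finset.mem_Icc.1 hi
  refine ⟨i, hi1, by omega, ?_⟩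
  rw [Finset.pair_comm, isCircuit_iff_isCircuit]
  exact ⟨hcircuit, hcard⟩

end Paper
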